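/- arXiv:2308.09149 — 3 statements merged into one kernel-verified Lean document; each statement's English description precedes it below -/
import Mathlib

section
/- For every integer k ≥ 3 and every N ≥ 1, the number of integers n ≤ N with tower-factorization height h(n) = k is at most N · ∑_{a ≥ 2↑↑(k-1)} ∑_p 1/p^a, and hence strictly less than 4N / 2↑↑k. -/
/-- The number of floors in the tower factorization of `n`: `h 1 = 0` and for `n > 1`
with canonical factorization `n = ∏ pᵢ^{aᵢ}`, `h n = 1 + maxᵢ h aᵢ`. -/
def towerHeight : ℕ → ℕ := fun n =>
  if n ≤ 1 then 0
  else 1 + n.primeFactors.sup fun p => towerHeight (n.factorization p)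
decreasing_by exact (Nat.factorization_lt p (by omega))

/-- The power tower of `k` twos: `2↑↑1 = 2`, `2↑↑(k+1) = 2^(2↑↑k)`. -/
def twoTower : ℕ → ℕ
  | 0 => 1
  | k + 1 => 2 ^ twoTower k

lemma twoTower_pos (k : ℕ) : 1 ≤ twoTower k := by
  cases k with
  | zero => simp [twoTower]
  | succ k => exact Nat.one_le_two_pow

lemma height_lower : ∀ n : ℕ, 1 ≤ n → twoTower (towerHeight n) ≤ n := by
  intro n
  induction n using Nat.strong_induction_on with
  | _ n ih =>
    intro hn
    rw [towerHeight]
    by_cases h1 : n ≤ 1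
    · simpa [h1, twoTower] using hn
    · simp only [h1, if_false]
      have hn1 : 1 < n := by omega
      obtain ⟨p, hp, hsup⟩ := Finset.exists_mem_eq_sup _
        (Nat.nonempty_primeFactors.mpr hn1)
        (fun p => towerHeight (n.factorization p))
      obtain ⟨hpp, hpd, hn0⟩ := Nat.mem_primeFactors.mp hp
      set a := n.factorization p with ha
      have halt : a < n := Nat.factorization_lt p (by omega)
      have h1a : 1 ≤ a := (Nat.Prime.factorization_pos_of_dvd hpp hn0 hpd)
      have iha : twoTower (towerHeight a) ≤ a := ih a halt h1a
      rw [hsup]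
      have : twoTower (1 + towerHeight a) = 2 ^ twoTower (towerHeight a) := by
        rw [Nat.add_comm]; rfl
      rw [this]
      calc 2 ^ twoTower (towerHeight a) ≤ 2 ^ a := Nat.pow_le_pow_right (by norm_num) iha
        _ ≤ p ^ a := Nat.pow_le_pow_left hpp.two_le a
        _ ≤ n := Nat.le_of_dvd (by omega) (Nat.ordProj_dvd n p)

lemma exists_pow_dvd {n k : ℕ} (hk : 1 ≤ k) (h : towerHeight n = k) (hn : 1 ≤ n) :
    ∃ p a : ℕ, p.Prime ∧ twoTower (k - 1) ≤ a ∧ p ^ a ∣ n := by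
  rw [towerHeight] at h
  by_cases h1 : n ≤ 1
  · simp [h1] at h; omega
  · simp only [h1, if_false] at h
    have hn1 : 1 < n := by omega
    obtain ⟨p, hp, hsup⟩ := Finset.exists_mem_eq_sup _
      (Nat.nonempty_primeFactors.mpr hn1)
      (fun p => towerHeight (n.factorization p))
    obtain ⟨hpp, hpd, hn0⟩ := Nat.mem_primeFactors.mp hp
    refine ⟨p, n.factorization p, hpp, ?_, Nat.ordProj_dvd n p⟩
    have h1a : 1 ≤ n.factorization p := Nat.Prime.factorization_pos_of_dvd hpp hn0 hpd
    have := height_lower (n.factorization p) h1a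
    rw [← hsup] at this
    have hs : (n.primeFactors.sup fun p => towerHeight (n.factorization p)) = k - 1 := by omega
    rwa [hs] at this

lemma cube_partial : ∀ n : ℕ, ∑ j ∈ Finset.range n, (1:ℝ)/((j:ℝ)+2)^3 ≤ 5/24 := by
  have key : ∀ n : ℕ, ∑ j ∈ Finset.range (n+1), (1:ℝ)/((j:ℝ)+2)^3
      + 1/(2*((n:ℝ)+2)*((n:ℝ)+3)) ≤ 5/24 := by
    intro n
    induction n with
    | zero => norm_num
    | succ m ih =>
      rw [Finset.sum_range_succ]
      have hm : (0:ℝ) < (m:ℝ) + 2 := by positivity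
      have step : (1:ℝ)/(((m:ℝ)+1)+2)^3 + 1/(2*(((m:ℝ)+1)+2)*(((m:ℝ)+1)+3))
          ≤ 1/(2*((m:ℝ)+2)*((m:ℝ)+3)) := by
        rw [div_add_div _ _ (by positivity) (by positivity), div_le_div_iff₀ (by positivity) (by positivity)]
        ring_nf
        nlinarith [sq_nonneg ((m:ℝ)), sq_nonneg ((m:ℝ)+1), pow_pos hm 3, sq_nonneg ((m:ℝ)*(m:ℝ))]
      push_cast
      push_cast at ih
      linarith
  intro n
  cases n with
  | zero => norm_num
  | succ m =>
    have := key m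
    have hpos : (0:ℝ) < 1/(2*((m:ℝ)+2)*((m:ℝ)+3)) := by positivity
    linarith

lemma summable_shift (e : ℕ) (he : 2 ≤ e) : Summable (fun j : ℕ => (1:ℝ)/((j:ℝ)+2)^e) := by
  have h := (Real.summable_one_div_nat_pow (p := e)).mpr he
  exact (h.comp_injective (add_left_injective 2)).congr
    (fun j => by simp only [Function.comp_apply]; push_cast; ring)

lemma summable_primes (a : ℕ) (ha : 2 ≤ a) :
    Summable (fun p : Nat.Primes => (1:ℝ)/((p:ℕ):ℝ)^a) := by
  have h := (Real.summable_one_div_nat_pow (p := a)).mpr ha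
  exact h.comp_injective Nat.Primes.coe_nat_injective

lemma prime_tsum_bound (a : ℕ) (ha : 3 ≤ a) :
    ∑' p : Nat.Primes, (1:ℝ)/((p:ℕ):ℝ)^a ≤ (5/3) * (1/2)^a := by
  have h2a : 2 ≤ a := by omega
  have hstep1 : ∑' p : Nat.Primes, (1:ℝ)/((p:ℕ):ℝ)^a ≤ ∑' j : ℕ, (1:ℝ)/((j:ℝ)+2)^a := by
    apply Summable.tsum_le_tsum_of_inj (fun p : Nat.Primes => (p:ℕ) - 2)
    · intro p q h
      have h' : p.1 - 2 = q.1 - 2 := h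
      have hp : 2 ≤ p.1 := p.2.two_le
      have hq : 2 ≤ q.1 := q.2.two_le
      exact Subtype.ext (by omega)
    · intro c _; positivity
    · intro p
      have hp := p.2.two_le
      have : (((p:ℕ) - 2 : ℕ) : ℝ) + 2 = ((p:ℕ):ℝ) := by
        have : ((p:ℕ) - 2) + 2 = (p:ℕ) := by omega
        exact_mod_cast congrArg (Nat.cast : ℕ → ℝ) this
      rw [this]
    · exact summable_primes a h2a
    · exact summable_shift a h2a
  have hstep2 : ∑' j : ℕ, (1:ℝ)/((j:ℝ)+2)^a ≤ (1/2^(a-3)) * (5/24) := by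
    have hpt : ∀ j : ℕ, (1:ℝ)/((j:ℝ)+2)^a ≤ (1/2^(a-3)) * ((1:ℝ)/((j:ℝ)+2)^3) := by
      intro j
      have hj : (0:ℝ) < (j:ℝ) + 2 := by positivity
      have h2j : (2:ℝ) ≤ (j:ℝ) + 2 := le_add_of_nonneg_left (Nat.cast_nonneg j)
      rw [one_div, one_div_mul_one_div, ← one_div]
      have hle : (2:ℝ)^(a-3) * ((j:ℝ)+2)^3 ≤ ((j:ℝ)+2)^a := by
        calc (2:ℝ)^(a-3) * ((j:ℝ)+2)^3 ≤ ((j:ℝ)+2)^(a-3) * ((j:ℝ)+2)^3 := by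
              apply mul_le_mul_of_nonneg_right (pow_le_pow_left₀ (by norm_num) h2j _) (by positivity)
          _ = ((j:ℝ)+2)^a := by rw [← pow_add]; congr 1; omega
      apply one_div_le_one_div_of_le
      · positivity
      · exact hle
    calc ∑' j : ℕ, (1:ℝ)/((j:ℝ)+2)^a
        ≤ ∑' j : ℕ, (1/2^(a-3)) * ((1:ℝ)/((j:ℝ)+2)^3) :=
          Summable.tsum_le_tsum hpt (summable_shift a h2a) ((summable_shift 3 (by norm_num)).mul_left _)
      _ = (1/2^(a-3)) * ∑' j : ℕ, (1:ℝ)/((j:ℝ)+2)^3 := tsum_mul_left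
      _ ≤ (1/2^(a-3)) * (5/24) := by
          apply mul_le_mul_of_nonneg_left _ (by positivity)
          exact Summable.tsum_le_of_sum_range_le (summable_shift 3 (by norm_num)) cube_partial
  have heq : (1/(2:ℝ)^(a-3)) * (5/24) = (5/3) * (1/2)^a := by
    have h2 : (2:ℝ)^a = 2^(a-3) * 8 := by
      rw [show (8:ℝ) = 2^3 by norm_num, ← pow_add]
      congr 1; omega
    rw [one_div_pow]
    rw [h2]
    field_simp
    ring
  linarith [hstep1, hstep2, heq.le]

lemma geom_tail (T : ℕ) : ∑' a : {a : ℕ // T ≤ a}, ((1:ℝ)/2)^(a:ℕ) ≤ 2 * (1/2)^T := by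
  have hsub : Summable (fun a : {a : ℕ // T ≤ a} => ((1:ℝ)/2)^(a:ℕ)) :=
    summable_geometric_two.comp_injective Subtype.val_injective
  have hg : Summable (fun i : ℕ => ((1:ℝ)/2)^(T+i)) := by
    simp only [pow_add]; exact summable_geometric_two.mul_left _
  have h1 : ∑' a : {a : ℕ // T ≤ a}, ((1:ℝ)/2)^(a:ℕ) ≤ ∑' i : ℕ, ((1:ℝ)/2)^(T+i) := by
    apply Summable.tsum_le_tsum_of_inj (fun a : {a : ℕ // T ≤ a} => (a:ℕ) - T)
    · intro a b h
      have ha := a.2; have hb := b.2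
      have h' : a.1 - T = b.1 - T := h
      exact Subtype.ext (by omega)
    · intro c _; positivity
    · intro a
      have h : T + ((a:ℕ) - T) = (a:ℕ) := by have := a.2; omega
      rw [h]
    · exact hsub
    · exact hg
  have h2 : ∑' i : ℕ, ((1:ℝ)/2)^(T+i) = (1/2)^T * 2 := by
    simp only [pow_add]
    rw [tsum_mul_left, tsum_geometric_two]
  linarith

lemma summable_outer (T : ℕ) (hT : 4 ≤ T) :
    Summable (fun a : {a : ℕ // T ≤ a} => ∑' p : Nat.Primes, (1:ℝ)/((p:ℕ):ℝ)^(a:ℕ)) := by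
  apply Summable.of_nonneg_of_le (fun a => tsum_nonneg (fun p => by positivity))
    (fun a => ?_) (((summable_geometric_two).mul_left (5/3)).comp_injective
      Subtype.val_injective)
  exact prime_tsum_bound (a:ℕ) (by have := a.2; omega)

lemma outer_bound (T : ℕ) (hT : 4 ≤ T) :
    ∑' a : {a : ℕ // T ≤ a}, ∑' p : Nat.Primes, (1:ℝ)/((p:ℕ):ℝ)^(a:ℕ)
      ≤ (10/3) * (1/2)^T := by
  have h1 : ∑' a : {a : ℕ // T ≤ a}, ∑' p : Nat.Primes, (1:ℝ)/((p:ℕ):ℝ)^(a:ℕ)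
      ≤ ∑' a : {a : ℕ // T ≤ a}, (5/3) * ((1:ℝ)/2)^(a:ℕ) := by
    exact Summable.tsum_le_tsum (f := fun a : {a : ℕ // T ≤ a} => ∑' p : Nat.Primes, (1:ℝ)/((p:ℕ):ℝ)^(a:ℕ))
      (g := fun a : {a : ℕ // T ≤ a} => (5/3) * ((1:ℝ)/2)^(a:ℕ))
      (fun a => prime_tsum_bound (a:ℕ) (by have := a.2; omega))
      (summable_outer T hT)
      (((summable_geometric_two).mul_left (5/3)).comp_injective Subtype.val_injective)
  have h2 : ∑' a : {a : ℕ // T ≤ a}, (5/3) * ((1:ℝ)/2)^(a:ℕ)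
      = (5/3) * ∑' a : {a : ℕ // T ≤ a}, ((1:ℝ)/2)^(a:ℕ) := tsum_mul_left
  have h3 := geom_tail T
  calc _ ≤ _ := h1
    _ = _ := h2
    _ ≤ (5/3) * (2 * (1/2)^T) := by linarith
    _ = (10/3) * (1/2)^T := by ring


lemma twoTower_strictMono : StrictMono twoTower := by
  apply strictMono_nat_of_lt_succ
  intro n
  exact Nat.lt_two_pow_self (n := twoTower n)

lemma count_le (k N : ℕ) (hk : 1 ≤ k) :
    (((Finset.Icc 1 N).filter fun n => towerHeight n = k).card : ℝ) ≤
      ∑ a ∈ Finset.Icc (twoTower (k-1)) N, ∑ p ∈ (Finset.Icc 1 N).filter Nat.Prime,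
        (N:ℝ) * (1/(p:ℝ)^a) := by
  set T := twoTower (k-1) with hTdef
  set A := Finset.Icc T N with hA
  set P := (Finset.Icc 1 N).filter Nat.Prime with hP
  have hsub : (Finset.Icc 1 N).filter (fun n => towerHeight n = k) ⊆
      (A ×ˢ P).biUnion (fun q => (Finset.Icc 1 N).filter (fun n => q.2 ^ q.1 ∣ n)) := by
    intro n hn
    obtain ⟨hmem, hht⟩ := Finset.mem_filter.mp hn
    obtain ⟨h1n, hnN⟩ := Finset.mem_Icc.mp hmem
    obtain ⟨p, a, hpp, hTa, hdvd⟩ := exists_pow_dvd hk hht h1n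
    have hpan : p ^ a ≤ n := Nat.le_of_dvd (by omega) hdvd
    have h1T : 1 ≤ T := twoTower_pos _
    have h2a : 2 ^ a ≤ p ^ a := Nat.pow_le_pow_left hpp.two_le a
    have haa : a < 2 ^ a := Nat.lt_two_pow_self (n := a)
    have hpa : p ≤ p ^ a := Nat.le_self_pow (by omega) p
    have hp2 := hpp.two_le
    apply Finset.mem_biUnion.mpr
    refine ⟨(a, p), Finset.mem_product.mpr ⟨Finset.mem_Icc.mpr ⟨hTa, by omega⟩,
        Finset.mem_filter.mpr ⟨Finset.mem_Icc.mpr ⟨by omega, by omega⟩, hpp⟩⟩,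
      Finset.mem_filter.mpr ⟨hmem, hdvd⟩⟩
  have hcard : ((Finset.Icc 1 N).filter (fun n => towerHeight n = k)).card ≤
      ∑ q ∈ A ×ˢ P, ((Finset.Icc 1 N).filter (fun n => q.2 ^ q.1 ∣ n)).card :=
    le_trans (Finset.card_le_card hsub) Finset.card_biUnion_le
  have hc2 : ∀ q ∈ A ×ˢ P, (((Finset.Icc 1 N).filter (fun n => q.2 ^ q.1 ∣ n)).card : ℝ)
      ≤ (N:ℝ) * (1/(q.2:ℝ)^q.1) := by
    intro q hq
    have hp : q.2.Prime := (Finset.mem_filter.mp (Finset.mem_product.mp hq).2).2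
    have hpos : 0 < q.2 ^ q.1 := pow_pos hp.pos _
    have hIoc : Finset.Icc 1 N = Finset.Ioc 0 N := Finset.Icc_add_one_left_eq_Ioc 0 N
    rw [hIoc, Nat.Ioc_filter_dvd_card_eq_div]
    have hdle := Nat.cast_div_le (α := ℝ) (m := N) (n := q.2 ^ q.1)
    rw [mul_one_div]
    push_cast at hdle
    exact hdle
  calc (((Finset.Icc 1 N).filter fun n => towerHeight n = k).card : ℝ)
      ≤ (∑ q ∈ A ×ˢ P, ((Finset.Icc 1 N).filter (fun n => q.2 ^ q.1 ∣ n)).card : ℕ) := by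
        exact_mod_cast hcard
    _ = ∑ q ∈ A ×ˢ P, ((((Finset.Icc 1 N).filter (fun n => q.2 ^ q.1 ∣ n)).card : ℕ) : ℝ) := by
        push_cast; rfl
    _ ≤ ∑ q ∈ A ×ˢ P, (N:ℝ) * (1/(q.2:ℝ)^q.1) := Finset.sum_le_sum hc2
    _ = ∑ a ∈ A, ∑ p ∈ P, (N:ℝ) * (1/(p:ℝ)^a) := by rw [Finset.sum_product]

lemma fin_le_tsum (T N : ℕ) (hT : 4 ≤ T) :
    ∑ a ∈ Finset.Icc T N, ∑ p ∈ (Finset.Icc 1 N).filter Nat.Prime, (1:ℝ)/(p:ℝ)^a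
      ≤ ∑' a : {a : ℕ // T ≤ a}, ∑' p : Nat.Primes, (1:ℝ)/((p:ℕ):ℝ)^(a:ℕ) := by
  set P := (Finset.Icc 1 N).filter Nat.Prime with hP
  have hinner : ∀ a : ℕ, 2 ≤ a →
      ∑ p ∈ P, (1:ℝ)/(p:ℝ)^a ≤ ∑' p : Nat.Primes, (1:ℝ)/((p:ℕ):ℝ)^a := by
    intro a ha
    have hJ : Function.Injective (fun x : {x // x ∈ P} =>
        (⟨x.1, (Finset.mem_filter.mp x.2).2⟩ : Nat.Primes)) := by
      intro x y h
      exact Subtype.ext (congrArg (Subtype.val : Nat.Primes → ℕ) h)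
    rw [← Finset.sum_attach P (fun p => (1:ℝ)/(p:ℝ)^a)]
    have hle := Summable.sum_le_tsum (s := P.attach.map ⟨_, hJ⟩)
      (f := fun p : Nat.Primes => (1:ℝ)/((p:ℕ):ℝ)^a)
      (fun p _ => by positivity) (summable_primes a ha)
    rw [Finset.sum_map] at hle
    exact hle
  have hJ2 : Function.Injective (fun x : {x // x ∈ Finset.Icc T N} =>
      (⟨x.1, (Finset.mem_Icc.mp x.2).1⟩ : {a : ℕ // T ≤ a})) := by
    intro x y h
    exact Subtype.ext (congrArg (Subtype.val : {a : ℕ // T ≤ a} → ℕ) h)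
  calc ∑ a ∈ Finset.Icc T N, ∑ p ∈ P, (1:ℝ)/(p:ℝ)^a
      ≤ ∑ a ∈ Finset.Icc T N, ∑' p : Nat.Primes, (1:ℝ)/((p:ℕ):ℝ)^a := by
        apply Finset.sum_le_sum
        intro a haA
        exact hinner a (by have := (Finset.mem_Icc.mp haA).1; omega)
    _ ≤ ∑' a : {a : ℕ // T ≤ a}, ∑' p : Nat.Primes, (1:ℝ)/((p:ℕ):ℝ)^(a:ℕ) := by
        rw [← Finset.sum_attach (Finset.Icc T N)
          (fun a => ∑' p : Nat.Primes, (1:ℝ)/((p:ℕ):ℝ)^a)]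
        have hle := Summable.sum_le_tsum (s := (Finset.Icc T N).attach.map ⟨_, hJ2⟩)
          (f := fun a : {a : ℕ // T ≤ a} => ∑' p : Nat.Primes, (1:ℝ)/((p:ℕ):ℝ)^(a:ℕ))
          (fun a _ => tsum_nonneg (fun p => by positivity)) (summable_outer T hT)
        rw [Finset.sum_map] at hle
        exact hle

theorem count_height_eq_bound (k N : ℕ) (hk : 3 ≤ k) (hN : 1 ≤ N) :
    (((Finset.Icc 1 N).filter fun n => towerHeight n = k).card : ℝ) ≤
      N * ∑' a : {a : ℕ // twoTower (k - 1) ≤ a}, ∑' p : Nat.Primes,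
        (1 : ℝ) / (p : ℕ) ^ (a : ℕ) ∧
    (((Finset.Icc 1 N).filter fun n => towerHeight n = k).card : ℝ) <
      4 * N / twoTower k := by
  set T := twoTower (k - 1) with hTdef
  have hT4 : 4 ≤ T := by
    have h2 : twoTower 2 ≤ twoTower (k - 1) := twoTower_strictMono.monotone (by omega)
    have : twoTower 2 = 4 := by norm_num [twoTower]
    omega
  have htk : twoTower k = 2 ^ T := by
    have hke : k = (k - 1) + 1 := by omega
    rw [hke]
    rfl
  have hcount := count_le k N (by omega)
  have hfin := fin_le_tsum T N hT4
  have hNpos : (0:ℝ) ≤ (N:ℝ) := Nat.cast_nonneg N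
  have hpart1 : (((Finset.Icc 1 N).filter fun n => towerHeight n = k).card : ℝ) ≤
      N * ∑' a : {a : ℕ // T ≤ a}, ∑' p : Nat.Primes, (1 : ℝ) / ((p:ℕ):ℝ) ^ (a : ℕ) := by
    calc (((Finset.Icc 1 N).filter fun n => towerHeight n = k).card : ℝ)
        ≤ ∑ a ∈ Finset.Icc T N, ∑ p ∈ (Finset.Icc 1 N).filter Nat.Prime,
            (N:ℝ) * (1/(p:ℝ)^a) := hcount
      _ = N * ∑ a ∈ Finset.Icc T N, ∑ p ∈ (Finset.Icc 1 N).filter Nat.Prime,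
            (1:ℝ)/(p:ℝ)^a := by
          rw [Finset.mul_sum]
          exact Finset.sum_congr rfl (fun a _ => by rw [Finset.mul_sum])
      _ ≤ N * ∑' a : {a : ℕ // T ≤ a}, ∑' p : Nat.Primes, (1 : ℝ) / ((p:ℕ):ℝ) ^ (a : ℕ) :=
          mul_le_mul_of_nonneg_left hfin hNpos
  refine ⟨hpart1, ?_⟩
  have houter := outer_bound T hT4
  have hN1 : (1:ℝ) ≤ (N:ℝ) := by exact_mod_cast hN
  have h2T : (0:ℝ) < 2 ^ T := by positivity
  calc (((Finset.Icc 1 N).filter fun n => towerHeight n = k).card : ℝ)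
      ≤ N * ∑' a : {a : ℕ // T ≤ a}, ∑' p : Nat.Primes, (1 : ℝ) / ((p:ℕ):ℝ) ^ (a : ℕ) :=
        hpart1
    _ ≤ N * ((10/3) * (1/2)^T) := mul_le_mul_of_nonneg_left houter hNpos
    _ < 4 * N / twoTower k := by
        rw [htk]
        push_cast
        rw [lt_div_iff₀ h2T]
        have h1 : (1/2^T : ℝ) * 2^T = 1 := by field_simp
        calc (N:ℝ) * (10/3 * (1/2)^T) * 2^T
            = (10/3) * N * ((1/2^T) * 2^T) := by rw [one_div_pow]; ring
          _ = (10/3) * N := by rw [h1, mul_one]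
          _ < 4 * N := by linarith
end

section
/- If n has tower-factorization height h(n) = k ≥ 2, then n has a prime-power divisor p^a (exactly dividing n) with exponent a ≥ 2↑↑(k-1), the power tower of k-1 twos; moreover, the smallest integer with height k is 2↑↑k. -/
lemma heightA : ∀ n, 1 ≤ n → twoTower (towerHeight n) ≤ n := by
  intro n
  induction n using Nat.strong_induction_on with
  | _ n ih =>
    intro h1
    rw [towerHeight]
    by_cases h : n ≤ 1
    · simp [h, twoTower]; omega
    · simp only [h, if_false]
      have hn2 : 2 ≤ n := by omega
      have hne : n.primeFactors.Nonempty := by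
        rw [Nat.nonempty_primeFactors]; omega
      obtain ⟨p, hp, hsup⟩ := Finset.exists_mem_eq_sup _ hne
        fun p => towerHeight (n.factorization p)
      rw [hsup]
      have hpp : p.Prime := Nat.prime_of_mem_primeFactors hp
      set a := n.factorization p with ha
      have ha1 : 1 ≤ a := (Nat.Prime.factorization_pos_of_dvd hpp (by omega)
        (Nat.dvd_of_mem_primeFactors hp))
      have halt : a < n := Nat.factorization_lt p (by omega)
      have h2 : twoTower (towerHeight a) ≤ a := ih a halt ha1
      have hdvd : p ^ a ∣ n := Nat.ordProj_dvd n p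
      calc twoTower (1 + towerHeight a) = 2 ^ twoTower (towerHeight a) := by
            rw [Nat.add_comm]; rfl
        _ ≤ 2 ^ a := Nat.pow_le_pow_right (by norm_num) h2
        _ ≤ p ^ a := Nat.pow_le_pow_left hpp.two_le a
        _ ≤ n := Nat.le_of_dvd (by omega) hdvd

lemma heightTower : ∀ k, towerHeight (twoTower k) = k := by
  intro k
  induction k with
  | zero => rw [towerHeight]; simp [twoTower]
  | succ k ih =>
    have he : 1 ≤ twoTower k := twoTower_pos k
    show towerHeight (2 ^ twoTower k) = k + 1
    rw [towerHeight]
    have h2 : ¬ (2 ^ twoTower k ≤ 1) := by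
      have : 2 ^ 1 ≤ 2 ^ twoTower k := Nat.pow_le_pow_right (by norm_num) he
      omega
    simp only [h2, if_false]
    have hpf : (2 ^ twoTower k).primeFactors = {2} := by
      rw [Nat.primeFactors_prime_pow (by omega) Nat.prime_two]
    rw [hpf]
    have hfac : (2 ^ twoTower k).factorization 2 = twoTower k := by
      rw [Nat.prime_two.factorization_pow]; simp
    rw [Finset.sup_singleton, hfac, ih]
    omega

theorem height_eq_imp (n k : ℕ) (hk : 2 ≤ k) (hn : towerHeight n = k) :
    (∃ p a : ℕ, p.Prime ∧ a = n.factorization p ∧ twoTower (k - 1) ≤ a ∧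
      p ^ a ∣ n ∧ ¬ p ^ (a + 1) ∣ n) ∧
    twoTower k ≤ n ∧
    towerHeight (twoTower k) = k ∧
    ∀ m : ℕ, towerHeight m = k → twoTower k ≤ m := by
  have hn1 : 1 < n := by
    by_contra h
    rw [towerHeight] at hn
    simp [show n ≤ 1 by omega] at hn
    omega
  refine ⟨?_, heightA n (by omega) |>.trans_eq' (by rw [hn]), heightTower k, fun m hm => ?_⟩
  · rw [towerHeight] at hn
    simp only [show ¬ n ≤ 1 by omega, if_false] at hn
    have hne : n.primeFactors.Nonempty := by rw [Nat.nonempty_primeFactors]; omega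
    obtain ⟨p, hp, hsup⟩ := Finset.exists_mem_eq_sup _ hne
      fun p => towerHeight (n.factorization p)
    have hpp : p.Prime := Nat.prime_of_mem_primeFactors hp
    refine ⟨p, n.factorization p, hpp, rfl, ?_, Nat.ordProj_dvd n p,
      Nat.pow_succ_factorization_not_dvd (by omega) hpp⟩
    have ha1 : 1 ≤ n.factorization p := Nat.Prime.factorization_pos_of_dvd hpp (by omega)
      (Nat.dvd_of_mem_primeFactors hp)
    have := heightA (n.factorization p) ha1
    rw [← hsup] at this
    have : twoTower (k - 1) ≤ twoTower (n.primeFactors.sup fun p => towerHeight (n.factorization p)) := by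
      have : k - 1 = n.primeFactors.sup fun p => towerHeight (n.factorization p) := by omega
      rw [this]
    omega
  · have hm1 : 1 ≤ m := by
      by_contra h
      rw [towerHeight] at hm
      simp [show m ≤ 1 by omega] at hm
      omega
    have := heightA m hm1
    rwa [hm] at this
end

section
/- For all integers ℓ ≥ 2 and k ≥ 2, there exist infinitely many positive integers n such that h(n+j) ≥ k for every j = 0, 1, …, ℓ-1, where h denotes the tower-factorization height. -/
/-- tower of twos -/
def towerTower : ℕ → ℕ
  | 0 => 1
  | m + 1 => 2 ^ towerTower m

lemma towerTower_pos (m : ℕ) : 1 ≤ towerTower m := by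
  induction m with
  | zero => simp [towerTower]
  | succ m ih => exact le_trans ih (by simpa [towerTower] using Nat.le_of_lt (Nat.lt_two_pow_self (n := _)))

lemma le_towerHeight {n : ℕ} (hn : 2 ≤ n) {p : ℕ} (hp : p ∈ n.primeFactors) :
    1 + towerHeight (n.factorization p) ≤ towerHeight n := by
  conv_rhs => rw [towerHeight]
  rw [if_neg (by omega)]
  exact Nat.add_le_add_left (Finset.le_sup (f := fun p => towerHeight (n.factorization p)) hp) 1

lemma towerHeight_prime_pow {p a : ℕ} (hp : p.Prime) (ha : 1 ≤ a) :
    towerHeight (p ^ a) = 1 + towerHeight a := by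
  rw [towerHeight]
  have h2 : 2 ≤ p ^ a := le_trans hp.two_le (Nat.le_self_pow (by omega) p)
  rw [if_neg (by omega)]
  rw [Nat.primeFactors_prime_pow (by omega) hp]
  simp [hp.factorization_pow]

lemma towerHeight_towerTower (m : ℕ) : towerHeight (towerTower m) = m := by
  induction m with
  | zero => simp [towerTower, towerHeight]
  | succ m ih =>
    rw [towerTower, towerHeight_prime_pow Nat.prime_two (towerTower_pos m), ih, Nat.add_comm]

theorem consecutive_large_heights (ℓ k : ℕ) (hℓ : 2 ≤ ℓ) (hk : 2 ≤ k) :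
    {n : ℕ | 1 ≤ n ∧ ∀ j < ℓ, k ≤ towerHeight (n + j)}.Infinite := by
  set T := towerTower (k - 1) with hT
  have hT1 : 1 ≤ T := towerTower_pos _
  set p : ℕ → ℕ := fun j => Nat.nth Nat.Prime j with hpdef
  have hp : ∀ j, (p j).Prime := fun j => Nat.prime_nth_prime j
  set s : ℕ → ℕ := fun j => (p j) ^ (T + 1) with hs
  set a : ℕ → ℕ := fun j => (p j) ^ T + s j * ℓ - j with ha
  have hco : (List.range ℓ).Pairwise (Function.onFun Nat.Coprime s) := by
    refine (List.pairwise_lt_range (n := ℓ)).imp ?_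
    intro i j hij
    exact Nat.Coprime.pow _ _ ((Nat.coprime_primes (hp i) (hp j)).mpr
      (fun h => absurd (Nat.nth_injective Nat.infinite_setOf_prime h) (by omega)))
  obtain ⟨n₀, hn₀⟩ := Nat.chineseRemainderOfList a s (List.range ℓ) hco
  set M : ℕ := ((List.range ℓ).map s).prod with hM
  have hMpos : 0 < M := by
    refine List.prod_pos ?_
    intro x hx
    simp only [hM, List.mem_map] at hx
    obtain ⟨j, _, rfl⟩ := hx
    exact Nat.pow_pos (hp j).pos
  refine Set.infinite_of_injective_forall_mem
    (f := fun t : ℕ => n₀ + (t + 1) * M) ?_ ?_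
  · intro x y hxy
    simp only at hxy
    have := Nat.eq_of_mul_eq_mul_right hMpos (by omega : (x+1) * M = (y+1) * M)
    omega
  · intro t
    simp only [Set.mem_setOf_eq]
    set n := n₀ + (t + 1) * M with hn
    have hnmem : ∀ j < ℓ, n ≡ a j [MOD s j] := by
      intro j hj
      have h1 : n ≡ n₀ [MOD s j] := by
        have : s j ∣ (t + 1) * M := Dvd.dvd.mul_left
          (List.dvd_prod (List.mem_map_of_mem (f := s) (List.mem_range.mpr hj))) _
        exact (Nat.modEq_iff_dvd' (Nat.le_add_right _ _)).mpr (by simpa [hn] using this)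
          |>.symm
      exact h1.trans (hn₀ j (List.mem_range.mpr hj))
    constructor
    · have h1 : 0 < (t + 1) * M := Nat.mul_pos (by omega) hMpos
      rw [hn]; omega
    · intro j hj
      have hsj : s j ∣ s j * ℓ := Dvd.intro ℓ rfl
      have hjle : j ≤ s j * ℓ := by
        calc j ≤ ℓ := by omega
        _ ≤ s j * ℓ := Nat.le_mul_of_pos_left _ (Nat.pow_pos (hp j).pos)
      have key : n + j ≡ (p j) ^ T [MOD s j] := by
        have h1 : n + j ≡ a j + j [MOD s j] := (hnmem j hj).add_right j
        have h2 : a j + j = (p j) ^ T + s j * ℓ := by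
          simp only [ha]; omega
        have h3 : (p j) ^ T + s j * ℓ ≡ (p j) ^ T + 0 [MOD s j] :=
          Nat.ModEq.add_left _ ((Nat.modEq_zero_iff_dvd).mpr hsj)
        calc n + j ≡ a j + j [MOD s j] := h1
          _ = (p j) ^ T + s j * ℓ := h2
          _ ≡ (p j) ^ T + 0 [MOD s j] := h3
          _ = (p j) ^ T := by omega
      have hlt : (p j)^T < s j := Nat.pow_lt_pow_right (hp j).one_lt (by omega)
      have hmod : (n + j) % s j = (p j)^T := by
        rw [key]; exact Nat.mod_eq_of_lt hlt
      have hdvdT : (p j) ^ T ∣ n + j := by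
        have hdm := Nat.div_add_mod (n + j) (s j)
        rw [hmod] at hdm
        have hpT : (p j)^T ∣ s j := pow_dvd_pow _ (by omega)
        calc (p j)^T ∣ s j * ((n + j) / s j) + (p j)^T :=
              Nat.dvd_add (Dvd.dvd.mul_right hpT _) dvd_rfl
          _ = n + j := hdm
      have hnj2 : 2 ≤ n + j := by
        have h1 : 2 ≤ (p j)^T := le_trans (hp j).two_le (Nat.le_self_pow (by omega) _)
        have h2 : 0 < n + j := by
          have := Nat.mul_pos (by omega : 0 < t + 1) hMpos; omega
        exact le_trans h1 (Nat.le_of_dvd h2 hdvdT)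
      have hndvd : ¬ (p j) ^ (T + 1) ∣ n + j := by
        intro hcon
        obtain ⟨c, hc⟩ := hcon
        have h0 : (n + j) % s j = 0 := by
          rw [hc]; exact Nat.mul_mod_right _ _
        have hz : (p j) ^ T = 0 := by rw [← hmod, h0]
        have hp0 : 0 < (p j) ^ T := pow_pos (hp j).pos T
        omega
      have hfact : (n + j).factorization (p j) = T := by
        have hne : n + j ≠ 0 := by omega
        have h1 : T ≤ (n + j).factorization (p j) :=
          (Nat.Prime.pow_dvd_iff_le_factorization (hp j) hne).mp hdvdT
        have h2 : ¬ (T + 1 ≤ (n + j).factorization (p j)) := fun h =>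
          hndvd ((Nat.Prime.pow_dvd_iff_le_factorization (hp j) hne).mpr h)
        omega
      have hmem : p j ∈ (n + j).primeFactors := by
        rw [Nat.mem_primeFactors]
        exact ⟨hp j, dvd_trans (dvd_pow_self _ (by omega)) hdvdT, by omega⟩
      have := le_towerHeight hnj2 hmem
      rw [hfact, hT, towerHeight_towerTower] at this
      omega
end
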